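/- arXiv:1503.06126 — 3 statements merged into one kernel-verified Lean document; each statement's English description precedes it below -/
import Mathlib

section
/- Let N, r, n be natural numbers with n ≥ 1, let L_1, …, L_n : (Fin N → ℂ) → ℂ be affine maps, and let w, w_1, …, w_r ∈ ℂ^N. Suppose none of L_1, …, L_n vanishes identically on the affine subspace S = {w + Σ_{l=1}^r c_l • w_l : c_1, …, c_r ∈ ℂ}. Then there exists a natural number p with 1 ≤ p ≤ n·r + 1 such that, with p regarded as an element of ℂ, L_i(w + Σ_{l=1}^r p^l • w_l) ≠ 0 for every i = 1, …, n. -/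
/-- If none of the affine maps `L_1, …, L_n` on `ℂ^N` vanishes identically
on the affine subspace `{w + ∑ c_l • w_l}`, then some natural number
`p` with `1 ≤ p ≤ n·r + 1` satisfies `L_i (w + ∑ p^l • w_l) ≠ 0` for all `i`. -/
theorem exists_param_all_nonzero (N r n : ℕ) (hn : 1 ≤ n)
    (L : Fin n → (Fin N → ℂ) → ℂ)
    (hL : ∀ i, ∃ (ℓ : (Fin N → ℂ) →ₗ[ℂ] ℂ) (c : ℂ), ∀ y, L i y = c + ℓ y)
    (w : Fin N → ℂ) (w' : Fin r → (Fin N → ℂ))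
    (hnv : ∀ i, ∃ c : Fin r → ℂ, L i (w + ∑ l : Fin r, c l • w' l) ≠ 0) :
    ∃ p : ℕ, 1 ≤ p ∧ p ≤ n * r + 1 ∧
      ∀ i, L i (w + ∑ l : Fin r, (p : ℂ) ^ ((l : ℕ) + 1) • w' l) ≠ 0 := by
  classical
  choose ℓ c hc using hL
  set P : Fin n → Polynomial ℂ := fun i =>
    Polynomial.C (c i + ℓ i w) +
      ∑ l : Fin r, Polynomial.C (ℓ i (w' l)) * Polynomial.X ^ ((l : ℕ) + 1) with hP
  -- evaluation of P i at x equals L i at the curve point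
  have heval : ∀ i (x : ℂ),
      (P i).eval x = L i (w + ∑ l : Fin r, x ^ ((l : ℕ) + 1) • w' l) := by
    intro i x
    rw [hc i]
    simp [hP, Polynomial.eval_finset_sum, map_add, map_sum, map_smul, smul_eq_mul]
    rw [Finset.sum_congr rfl fun l _ => mul_comm ((ℓ i) (w' l)) (x ^ ((l:ℕ) + 1))]
    ring
  -- each P i is nonzero
  have hPne : ∀ i, P i ≠ 0 := by
    intro i h0
    obtain ⟨cc, hcc⟩ := hnv i
    apply hcc
    have hcoeff0 : (P i).coeff 0 = c i + ℓ i w := by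
      simp [hP, Polynomial.finset_sum_coeff, Polynomial.coeff_X_pow]
    have hcoeffl : ∀ k : Fin r, (P i).coeff ((k : ℕ) + 1) = ℓ i (w' k) := by
      intro k
      simp only [hP, Polynomial.coeff_add, Polynomial.coeff_C, Polynomial.finset_sum_coeff,
        Polynomial.coeff_C_mul, Polynomial.coeff_X_pow]
      rw [Finset.sum_eq_single k]
      · simp
      · intro b _ hb
        have : (b : ℕ) + 1 ≠ (k : ℕ) + 1 := by
          simpa [Fin.ext_iff] using hb
        rw [if_neg (Ne.symm this), mul_zero]
      · simp
    have h1 : c i + ℓ i w = 0 := by rw [← hcoeff0, h0]; simp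
    have h2 : ∀ k : Fin r, ℓ i (w' k) = 0 := by
      intro k; rw [← hcoeffl k, h0]; simp
    rw [hc i]
    simp [map_add, map_sum, map_smul, smul_eq_mul, h2]
    linear_combination h1
  -- degree bound
  have hdeg : ∀ i, (P i).natDegree ≤ r := by
    intro i
    refine le_trans (Polynomial.natDegree_add_le _ _) ?_
    simp only [Polynomial.natDegree_C, max_le_iff]
    constructor
    · exact Nat.zero_le r
    · refine Polynomial.natDegree_sum_le_of_forall_le _ _ fun l _ => ?_
      refine le_trans (Polynomial.natDegree_C_mul_le _ _) ?_
      rw [Polynomial.natDegree_X_pow]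
      omega
  -- counting
  set T : Finset ℕ := Finset.Icc 1 (n * r + 1) with hT
  set Bad : Finset ℕ := T.filter (fun p => ∃ i, (P i).eval (p : ℂ) = 0) with hBad
  have hinj : Function.Injective (fun p : ℕ => (p : ℂ)) := Nat.cast_injective
  have hsub : Bad.image (fun p : ℕ => (p : ℂ)) ⊆
      Finset.univ.biUnion (fun i => (P i).roots.toFinset) := by
    intro x hx
    obtain ⟨p, hp, rfl⟩ := Finset.mem_image.mp hx
    obtain ⟨i, hi⟩ := (Finset.mem_filter.mp hp).2
    refine Finset.mem_biUnion.mpr ⟨i, Finset.mem_univ i, ?_⟩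
    rw [Multiset.mem_toFinset, Polynomial.mem_roots (hPne i)]
    exact hi
  have hcard : Bad.card ≤ n * r := by
    calc Bad.card = (Bad.image (fun p : ℕ => (p : ℂ))).card :=
          (Finset.card_image_of_injective _ hinj).symm
      _ ≤ (Finset.univ.biUnion (fun i => (P i).roots.toFinset)).card :=
          Finset.card_le_card hsub
      _ ≤ ∑ i : Fin n, ((P i).roots.toFinset).card := Finset.card_biUnion_le
      _ ≤ ∑ _i : Fin n, r := by
          refine Finset.sum_le_sum fun i _ => ?_
          exact le_trans (Multiset.toFinset_card_le _)
            (le_trans (Polynomial.card_roots' _) (hdeg i))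
      _ = n * r := by simp [mul_comm]
  have hTcard : T.card = n * r + 1 := by simp [hT]
  have : ∃ p ∈ T, p ∉ Bad := by
    by_contra h
    push_neg at h
    have : T ⊆ Bad := fun p hp => h p hp
    have := Finset.card_le_card this
    omega
  obtain ⟨p, hpT, hpB⟩ := this
  have hp' := Finset.mem_Icc.mp hpT
  refine ⟨p, hp'.1, hp'.2, ?_⟩
  intro i
  rw [← heval i]
  intro h0
  exact hpB (Finset.mem_filter.mpr ⟨hpT, ⟨i, h0⟩⟩)
end

section
/- Let K = HahnSeries ℚ ℂ, let A be an m × n matrix over K and b ∈ K^m, all of whose entries have integer support (every exponent in the support of each A_{i,j} and each b_i is an integer). If x ∈ K^n satisfies A.mulVec x = b, then for every c ∈ ℚ the componentwise coset restriction R_c x (defined by (R_c x)_j = R_c (x_j)) satisfies A.mulVec (R_c x) = R_c b componentwise; moreover R_c b = b when c ∈ ℤ and R_c b = 0 when c ∉ ℤ. -/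
open scoped Classical in
/-- The coset restriction `R_c : HahnSeries ℚ ℂ → HahnSeries ℚ ℂ` keeping only the
coefficients at exponents congruent to `c` modulo `ℤ`. -/
noncomputable def cosetRestrict (c : ℚ) (x : HahnSeries ℚ ℂ) : HahnSeries ℚ ℂ where
  coeff s := if ∃ k : ℤ, s - c = (k : ℚ) then x.coeff s else 0
  isPWO_support' := x.isPWO_support'.mono (by
    intro s hs
    simp only [Function.mem_support, ne_eq] at hs ⊢
    intro h
    apply hs
    split_ifs <;> simp [h])

/-! Multiplication by a series supported on `ℤ` shifts exponents by integers, so it preserves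
each coset `c + ℤ`; hence `R_c` is additive and commutes with such multiplications, and
applying it to `A x = b` row by row gives `A (R_c x) = R_c b`. A series supported on `ℤ`
lies entirely in the coset `0 + ℤ`, which is `c + ℤ` exactly when `c ∈ ℤ`. -/

lemma exists_int_add_int_eq_iff (q : ℚ) (l : ℤ) :
    (∃ k : ℤ, q + l = k) ↔ ∃ k : ℤ, q = k :=
  ⟨fun ⟨k, hk⟩ => ⟨k - l, by push_cast; linarith⟩,
    fun ⟨k, hk⟩ => ⟨k + l, by push_cast; rw [hk]⟩⟩

lemma exists_int_int_sub_eq_iff (q : ℚ) (l : ℤ) :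
    (∃ k : ℤ, l - q = k) ↔ ∃ k : ℤ, q = k :=
  ⟨fun ⟨k, hk⟩ => ⟨l - k, by push_cast; linarith⟩,
    fun ⟨k, hk⟩ => ⟨l - k, by push_cast; rw [hk]⟩⟩

def HasIntSupport (x : HahnSeries ℚ ℂ) : Prop :=
  ∀ s ∈ x.support, ∃ k : ℤ, s = (k : ℚ)

open scoped Classical in
lemma cosetRestrict_coeff (c : ℚ) (x : HahnSeries ℚ ℂ) (s : ℚ) :
    (cosetRestrict c x).coeff s = if ∃ k : ℤ, s - c = (k : ℚ) then x.coeff s else 0 := rfl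

lemma cosetRestrict_support_subset (c : ℚ) (x : HahnSeries ℚ ℂ) :
    (cosetRestrict c x).support ⊆ x.support :=
  Function.support_subset_iff'.mpr fun s hs => by
    rw [cosetRestrict_coeff, Function.notMem_support.mp hs, ite_self]

noncomputable def cosetRestrictAddHom (c : ℚ) : HahnSeries ℚ ℂ →+ HahnSeries ℚ ℂ where
  toFun := cosetRestrict c
  map_zero' := by ext s; simp [cosetRestrict_coeff]
  map_add' x y := by ext s; simp only [HahnSeries.coeff_add, cosetRestrict_coeff]; split_ifs <;> simp

lemma cosetRestrict_sum (c : ℚ) {ι : Type*} (t : Finset ι) (f : ι → HahnSeries ℚ ℂ) :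
    cosetRestrict c (∑ i ∈ t, f i) = ∑ i ∈ t, cosetRestrict c (f i) :=
  map_sum (cosetRestrictAddHom c) f t

lemma cosetRestrict_mul_of_hasIntSupport {a : HahnSeries ℚ ℂ} (ha : HasIntSupport a) (c : ℚ)
    (x : HahnSeries ℚ ℂ) : cosetRestrict c (a * x) = a * cosetRestrict c x := by
  classical
  ext s
  rw [cosetRestrict_coeff, HahnSeries.coeff_mul,
    HahnSeries.coeff_mul_right' x.isPWO_support (cosetRestrict_support_subset c x)]
  have hcoset : ∀ ij ∈ Finset.antidiagonal a.isPWO_support x.isPWO_support s,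
      (cosetRestrict c x).coeff ij.2 =
        if ∃ k : ℤ, s - c = (k : ℚ) then x.coeff ij.2 else 0 := by
    intro ij hij
    obtain ⟨hi, -, hsum⟩ := Finset.mem_antidiagonal.mp hij
    obtain ⟨l, hl⟩ := ha _ hi
    have : s - c = (ij.2 - c) + l := by rw [← hl, ← hsum]; ring
    rw [cosetRestrict_coeff, this, exists_int_add_int_eq_iff]
  calc _ = ∑ ij ∈ Finset.antidiagonal a.isPWO_support x.isPWO_support s,
        a.coeff ij.1 * if ∃ k : ℤ, s - c = (k : ℚ) then x.coeff ij.2 else 0 := by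
          split_ifs <;> simp
    _ = _ := Finset.sum_congr rfl fun ij hij => by rw [hcoset ij hij]

open scoped Classical in
lemma cosetRestrict_coeff_of_hasIntSupport {x : HahnSeries ℚ ℂ} (hx : HasIntSupport x)
    (c s : ℚ) : (cosetRestrict c x).coeff s = if ∃ k : ℤ, c = (k : ℚ) then x.coeff s else 0 := by
  rw [cosetRestrict_coeff]
  by_cases hs : x.coeff s = 0
  · simp [hs]
  · obtain ⟨l, rfl⟩ := hx s hs
    simp only [exists_int_int_sub_eq_iff]

lemma cosetRestrict_eq_self_of_hasIntSupport {x : HahnSeries ℚ ℂ} (hx : HasIntSupport x)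
    {c : ℚ} (hc : ∃ k : ℤ, c = (k : ℚ)) : cosetRestrict c x = x := by
  ext s
  rw [cosetRestrict_coeff_of_hasIntSupport hx, if_pos hc]

lemma cosetRestrict_eq_zero_of_hasIntSupport {x : HahnSeries ℚ ℂ} (hx : HasIntSupport x)
    {c : ℚ} (hc : ¬∃ k : ℤ, c = (k : ℚ)) : cosetRestrict c x = 0 := by
  ext s
  rw [cosetRestrict_coeff_of_hasIntSupport hx, if_neg hc, HahnSeries.coeff_zero]

lemma mulVec_cosetRestrict {m n : Type*} [Fintype n] {A : Matrix m n (HahnSeries ℚ ℂ)}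
    (hA : ∀ i j, HasIntSupport (A i j)) (c : ℚ) (x : n → HahnSeries ℚ ℂ) :
    A.mulVec (fun j => cosetRestrict c (x j)) = fun i => cosetRestrict c (A.mulVec x i) := by
  funext i
  simp only [Matrix.mulVec, dotProduct, cosetRestrict_sum,
    cosetRestrict_mul_of_hasIntSupport (hA i _)]

/-- For a linear system `A.mulVec x = b` over `HahnSeries ℚ ℂ` whose matrix
and right-hand side have integer support, the componentwise coset restriction of any
solution satisfies `A.mulVec (R_c x) = R_c b` for every `c ∈ ℚ`; moreover `R_c b = b`
if `c ∈ ℤ` and `R_c b = 0` if `c ∉ ℤ`. -/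
theorem cosetRestrict_solution (m n : ℕ)
    (A : Matrix (Fin m) (Fin n) (HahnSeries ℚ ℂ)) (b : Fin m → HahnSeries ℚ ℂ)
    (hA : ∀ i j, ∀ s ∈ (A i j).support, ∃ k : ℤ, s = (k : ℚ))
    (hb : ∀ i, ∀ s ∈ (b i).support, ∃ k : ℤ, s = (k : ℚ))
    (x : Fin n → HahnSeries ℚ ℂ) (hx : A.mulVec x = b) :
    ∀ c : ℚ,
      A.mulVec (fun j => cosetRestrict c (x j)) = (fun i => cosetRestrict c (b i)) ∧
      ((∃ k : ℤ, c = (k : ℚ)) → (fun i => cosetRestrict c (b i)) = b) ∧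
      (¬ (∃ k : ℤ, c = (k : ℚ)) → (fun i => cosetRestrict c (b i)) = 0) := by
  intro c
  exact ⟨by rw [mulVec_cosetRestrict hA, hx],
    fun hc => funext fun i => cosetRestrict_eq_self_of_hasIntSupport (hb i) hc,
    fun hc => funext fun i => cosetRestrict_eq_zero_of_hasIntSupport (hb i) hc⟩
end

section
/- Let m, n be natural numbers, let a : Fin m → Fin n → LaurentSeries ℂ, b : Fin m → LaurentSeries ℂ, and let R : Fin n → ℤ satisfy Trop(a i j) ≥ −(R j) for all i, j. Then the following are equivalent: (1) there exist x_j ∈ LaurentSeries ℂ (j ∈ Fin n) with Trop(x_j) = 0 for all j and Trop(b_i − Σ_j a_{i,j} * x_j) = 0 for all i; (2) there exist such x_j which in addition are polynomial truncations, i.e., the support of each x_j is contained in the integer interval [0, max(R j, 0)] (so each x_j is a polynomial in t of degree at most max(R j, 0) with nonzero constant term). -/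
/-!
Truncate each `x j` below degree `max (R j) 0 + 1`. The truncation keeps the order `0` of `x j`
and differs from `x j` by a series of order `> max (R j) 0`, so by `Trop (a i j) ≥ -(R j)` each
product `a i j * x j` changes only in degrees `≥ 1`, and the residual `b i - ∑ j, a i j * x j`
keeps its order `0`.
-/

namespace HahnSeries

variable {Γ R : Type*}

section LinearOrder

variable [LinearOrder Γ]

theorem le_orderTop_sum [AddCommMonoid R] {ι : Type*} (s : Finset ι) (f : ι → R⟦Γ⟧)
    {c : WithTop Γ} (h : ∀ i ∈ s, c ≤ (f i).orderTop) : c ≤ (∑ i ∈ s, f i).orderTop :=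
  Finset.sum_induction f (fun y ↦ c ≤ y.orderTop)
    (fun _ _ hy hz ↦ (le_min hy hz).trans min_orderTop_le_orderTop_add) (by simp) h

variable [AddCommGroup R]

theorem le_orderTop_sub_truncLT (c : Γ) (x : R⟦Γ⟧) :
    (c : WithTop Γ) ≤ (x - truncLT c x).orderTop :=
  le_orderTop_iff_forall.2 fun j hj ↦ by
    rw [coeff_sub, coeff_truncLT_of_lt (WithTop.coe_lt_coe.1 hj), sub_self]

theorem orderTop_truncLT_of_lt {c : Γ} {x : R⟦Γ⟧} (h : x.orderTop < c) :
    (truncLT c x).orderTop = x.orderTop := by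
  rw [← sub_sub_cancel x (truncLT c x)]
  exact orderTop_sub (h.trans_le (le_orderTop_sub_truncLT c x))

theorem support_truncLT_subset_Ico {c g : Γ} {x : R⟦Γ⟧} (h : (g : WithTop Γ) ≤ x.orderTop) :
    (truncLT c x).support ⊆ Set.Ico g c := by
  intro k hk
  rw [support_truncLT] at hk
  exact ⟨WithTop.coe_le_coe.1 (h.trans (orderTop_le_of_coeff_ne_zero hk.1)), hk.2⟩

end LinearOrder

theorem orderTop_sub_sum_mul_eq_of_lt [AddCommMonoid Γ] [LinearOrder Γ]
    [IsOrderedCancelAddMonoid Γ] [Ring R] {ι : Type*} (s : Finset ι) (b : R⟦Γ⟧)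
    (a x y : ι → R⟦Γ⟧) {c : WithTop Γ} (hres : (b - ∑ i ∈ s, a i * x i).orderTop < c)
    (hxy : ∀ i ∈ s, c ≤ (a i).orderTop + (x i - y i).orderTop) :
    (b - ∑ i ∈ s, a i * y i).orderTop = (b - ∑ i ∈ s, a i * x i).orderTop := by
  have hsplit : b - ∑ i ∈ s, a i * y i =
      (b - ∑ i ∈ s, a i * x i) + ∑ i ∈ s, a i * (x i - y i) := by
    simp only [mul_sub, Finset.sum_sub_distrib]
    abel
  rw [hsplit]
  refine orderTop_add_eq_left (hres.trans_le (le_orderTop_sum s _ fun i hi ↦ ?_))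
  exact (hxy i hi).trans orderTop_add_le_mul

end HahnSeries

open HahnSeries

/-- Given Laurent series `a i j` with `Trop (a i j) ≥ -(R j)` and `b i`,
the system of tropical conditions `Trop (x j) = 0` and `Trop (b i - ∑ j a i j * x j) = 0`
has a solution iff it has a solution by polynomial truncations, i.e. with each `x j`
supported in the integer interval `[0, max (R j) 0]`. -/
theorem laurent_solution_iff_truncated_solution (m n : ℕ)
    (a : Fin m → Fin n → LaurentSeries ℂ) (b : Fin m → LaurentSeries ℂ)
    (R : Fin n → ℤ) (ha : ∀ i j, ((-(R j) : ℤ) : WithTop ℤ) ≤ (a i j).orderTop) :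
    (∃ x : Fin n → LaurentSeries ℂ,
        (∀ j, (x j).orderTop = (0 : WithTop ℤ)) ∧
        (∀ i, (b i - ∑ j, a i j * x j).orderTop = (0 : WithTop ℤ))) ↔
    (∃ x : Fin n → LaurentSeries ℂ,
        (∀ j, (x j).orderTop = (0 : WithTop ℤ)) ∧
        (∀ i, (b i - ∑ j, a i j * x j).orderTop = (0 : WithTop ℤ)) ∧
        (∀ j, (x j).support ⊆ Set.Icc (0 : ℤ) (max (R j) 0))) := by
  refine ⟨fun ⟨x, hx, hres⟩ ↦ ?_, fun ⟨x, hx, hres, _⟩ ↦ ⟨x, hx, hres⟩⟩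
  have htrunc : ∀ j, (truncLT (max (R j) 0 + 1) (x j)).orderTop = 0 := fun j ↦
    (orderTop_truncLT_of_lt (by rw [hx j]; exact_mod_cast (by omega))).trans (hx j)
  refine ⟨fun j ↦ truncLT (max (R j) 0 + 1) (x j), htrunc, fun i ↦ ?_, fun j ↦ ?_⟩
  · have hres_lt : (b i - ∑ j, a i j * x j).orderTop < (1 : ℤ) := by
      rw [hres i]
      exact_mod_cast zero_lt_one
    rw [orderTop_sub_sum_mul_eq_of_lt _ _ _ _ _ hres_lt fun j _ ↦ ?_, hres i]
    calc ((1 : ℤ) : WithTop ℤ)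
        ≤ ((-R j : ℤ) : WithTop ℤ) + ((max (R j) 0 + 1 : ℤ) : WithTop ℤ) := by
          rw [← WithTop.coe_add, WithTop.coe_le_coe]
          omega
      _ ≤ _ := add_le_add (ha i j) (le_orderTop_sub_truncLT _ _)
  · rw [← Set.Ico_add_one_right_eq_Icc]
    exact support_truncLT_subset_Ico (hx j).ge
end
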